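/- Let χ, ψ, β : ℝ³ → ℝ be C¹ functions of the variables (x,u,p) satisfying the contact conditions, and let u : ℝ → ℝ be C² on a neighborhood of x₀ with prolonged curve γ_u(x) = (x, u(x), u'(x)). Set X̃ = χ ∘ γ_u and assume X̃'(x) ≠ 0 for all x near x₀. Suppose V : ℝ → ℝ is C² on a neighborhood of X̃(x₀) with V ∘ X̃ = ψ ∘ γ_u near x₀. Then, writing p = u'(x₀) and q = u''(x₀) and evaluating all partial derivatives at (x₀, u(x₀), p): V'(X̃(x₀)) = β(x₀, u(x₀), p) and V''(X̃(x₀)) = (β_x + p·β_u + q·β_p)/(χ_x + p·χ_u + q·χ_p). That is, the prolonged contact transformation acts on second-order jets by P = β and Q = (β_x + pβ_u + qβ_p)/(χ_x + pχ_u + qχ_p). -/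

import Mathlib

/-!
Along the prolonged curve the contact conditions say that the total derivatives satisfy
`D_x ψ = β · D_x χ`, where `D_x f = f_x + p f_u + q f_p`. Differentiating `V ∘ X̃ = ψ ∘ γ_u`
therefore gives `V' ∘ X̃ = β ∘ γ_u` on a whole neighbourhood of `x₀` (this is where `X̃' ≠ 0`
near `x₀` is needed), and differentiating this identity once more at `x₀` gives
`V''(X̃ x₀) · D_x χ = D_x β`.
-/

open Filter Topology

section Prolongation

variable {𝕜 : Type*} [NontriviallyNormedField 𝕜]

lemma ContinuousLinearMap.apply_one_eq_add_add (f : 𝕜 × 𝕜 × 𝕜 →L[𝕜] 𝕜) (a b : 𝕜) :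
    f (1, a, b) = f (1, 0, 0) + a * f (0, 1, 0) + b * f (0, 0, 1) := by
  have h : ((1, a, b) : 𝕜 × 𝕜 × 𝕜) = (1, 0, 0) + a • (0, 1, 0) + b • (0, 0, 1) := by
    simp
  rw [h, map_add, map_add, map_smul, map_smul, smul_eq_mul, smul_eq_mul]

lemma hasDerivAt_prolongation {u : 𝕜 → 𝕜} {x : 𝕜} (hu : ContDiffAt 𝕜 2 u x) :
    HasDerivAt (fun y => (y, u y, deriv u y)) (1, deriv u x, deriv (deriv u) x) x :=
  (hasDerivAt_id x).prodMk ((hu.differentiableAt two_ne_zero).hasDerivAt.prodMk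
    ((hu.derivWithin (m := 1) (by norm_num)).differentiableAt one_ne_zero).hasDerivAt)

lemma hasDerivAt_comp_prolongation {f : 𝕜 × 𝕜 × 𝕜 → 𝕜} {u : 𝕜 → 𝕜} {x : 𝕜}
    (hf : DifferentiableAt 𝕜 f (x, u x, deriv u x)) (hu : ContDiffAt 𝕜 2 u x) :
    HasDerivAt (fun y => f (y, u y, deriv u y))
      (fderiv 𝕜 f (x, u x, deriv u x) (1, 0, 0)
        + deriv u x * fderiv 𝕜 f (x, u x, deriv u x) (0, 1, 0)
        + deriv (deriv u) x * fderiv 𝕜 f (x, u x, deriv u x) (0, 0, 1)) x := by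
  rw [← ContinuousLinearMap.apply_one_eq_add_add]
  exact hf.hasFDerivAt.comp_hasDerivAt x (hasDerivAt_prolongation hu)

end Prolongation

lemma deriv_eq_div_of_comp_eventuallyEq {𝕜 : Type*} [NontriviallyNormedField 𝕜]
    {W X Φ : 𝕜 → 𝕜} {x D E : 𝕜} (hX : HasDerivAt X D x) (hD : D ≠ 0)
    (hW : DifferentiableAt 𝕜 W (X x)) (hΦ : HasDerivAt Φ E x)
    (hWX : (fun y => W (X y)) =ᶠ[𝓝 x] Φ) :
    deriv W (X x) = E / D := by
  rw [eq_div_iff hD]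
  exact (hW.hasDerivAt.comp x hX).congr_of_eventuallyEq hWX.symm |>.unique hΦ

/-- A contact transformation `(χ, ψ, β)` prolongs to second-order jets by
`P = β` and `Q = (β_x + p β_u + q β_p)/(χ_x + p χ_u + q χ_p)`. -/
theorem second_prolongation_of_contact_transformation
    (χ ψ β : ℝ × ℝ × ℝ → ℝ)
    (hχ : ContDiff ℝ 1 χ) (hψ : ContDiff ℝ 1 ψ) (hβ : ContDiff ℝ 1 β)
    (contact₁ : ∀ z : ℝ × ℝ × ℝ, fderiv ℝ ψ z (0, 0, 1) = β z * fderiv ℝ χ z (0, 0, 1))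
    (contact₂ : ∀ z : ℝ × ℝ × ℝ,
      fderiv ℝ ψ z (1, 0, 0) + z.2.2 * fderiv ℝ ψ z (0, 1, 0) =
        β z * (fderiv ℝ χ z (1, 0, 0) + z.2.2 * fderiv ℝ χ z (0, 1, 0)))
    (u : ℝ → ℝ) (x₀ : ℝ) (hu : ContDiffAt ℝ 2 u x₀)
    (γ : ℝ → ℝ × ℝ × ℝ) (hγ : ∀ x, γ x = (x, u x, deriv u x))
    (Xt : ℝ → ℝ) (hXt : ∀ x, Xt x = χ (γ x))
    (hX' : ∀ᶠ x in nhds x₀, deriv Xt x ≠ 0)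
    (V : ℝ → ℝ) (hV : ContDiffAt ℝ 2 V (Xt x₀))
    (hVU : ∀ᶠ x in nhds x₀, V (Xt x) = ψ (γ x))
    (p q : ℝ) (hp : p = deriv u x₀) (hq : q = deriv (deriv u) x₀) :
    deriv V (Xt x₀) = β (x₀, u x₀, p) ∧
    deriv (deriv V) (Xt x₀) =
      (fderiv ℝ β (x₀, u x₀, p) (1, 0, 0) + p * fderiv ℝ β (x₀, u x₀, p) (0, 1, 0)
          + q * fderiv ℝ β (x₀, u x₀, p) (0, 0, 1)) /
        (fderiv ℝ χ (x₀, u x₀, p) (1, 0, 0) + p * fderiv ℝ χ (x₀, u x₀, p) (0, 1, 0)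
          + q * fderiv ℝ χ (x₀, u x₀, p) (0, 0, 1)) := by
  obtain rfl : γ = fun x => (x, u x, deriv u x) := funext hγ
  obtain rfl : Xt = fun x => χ (x, u x, deriv u x) := funext hXt
  subst hp hq
  have hXt_deriv {x} (hux : ContDiffAt ℝ 2 u x) :=
    hasDerivAt_comp_prolongation (hχ.differentiable one_ne_zero _) hux
  have hu_near : ∀ᶠ x in 𝓝 x₀, ContDiffAt ℝ 2 u x := hu.eventually (by simp)
  have hV_near : ∀ᶠ x in 𝓝 x₀, ContDiffAt ℝ 2 V (χ (x, u x, deriv u x)) :=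
    (hXt_deriv hu).continuousAt.eventually (hV.eventually (by simp))
  have hV'_eq : ∀ᶠ x in 𝓝 x₀, deriv V (χ (x, u x, deriv u x)) = β (x, u x, deriv u x) := by
    filter_upwards [hu_near, hX', hV_near, hVU.eventually_nhds] with x hux hXx hVx hVUx
    rw [(hXt_deriv hux).deriv] at hXx
    rw [deriv_eq_div_of_comp_eventuallyEq (hXt_deriv hux) hXx (hVx.differentiableAt two_ne_zero)
      (hasDerivAt_comp_prolongation (hψ.differentiable one_ne_zero _) hux) hVUx, div_eq_iff hXx]
    linear_combination
      contact₂ (x, u x, deriv u x) + deriv (deriv u) x * contact₁ (x, u x, deriv u x)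
  have hX₀ := hX'.self_of_nhds
  rw [(hXt_deriv hu).deriv] at hX₀
  refine ⟨hV'_eq.self_of_nhds, ?_⟩
  exact deriv_eq_div_of_comp_eventuallyEq (hXt_deriv hu) hX₀
    ((hV.derivWithin (m := 1) (by norm_num)).differentiableAt one_ne_zero)
    (hasDerivAt_comp_prolongation (hβ.differentiable one_ne_zero _) hu) hV'_eq
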